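/- arXiv:1005.1149 — 6 statements merged into one kernel-verified Lean document; each statement's English description precedes it below -/
import Mathlib

section
/- Let $G$ be an abelian group and $m\in\mathbb{N}$ with $m\geq 1$. Then every strictly descending chain of nonempty elementary algebraic subsets of $G$ (i.e., cosets of the form $a+G[n]$) is finite; more precisely, if $a+G[n]$ is a proper subset of $b+G[m]$ with $m\geq 1$, then $G[n]=G[d]$ for some positive divisor $d$ of $m$. -/
private lemma tor_sub {G : Type*} [AddCommGroup G] {a b : G} {n m : ℕ}
    (h : (fun x => a + x) '' {x : G | n • x = 0} ⊆ (fun x => b + x) '' {x : G | m • x = 0}) :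
    {x : G | n • x = 0} ⊆ {x : G | m • x = 0} := by
  obtain ⟨t0, ht0, ha⟩ := h ⟨0, by simp, rfl⟩
  intro x hx
  obtain ⟨t, ht, hax⟩ := h ⟨x, hx, rfl⟩
  simp only [Set.mem_setOf_eq] at *
  have hx' : x = t - t0 := by
    have h2 : b + t = a + x := hax
    have h1 : b + t0 = a := by simpa using ha
    rw [← h1] at h2
    have : t = t0 + x := by
      apply add_left_cancel (a := b); rw [h2]; abel
    rw [this]; abel
  rw [hx', smul_sub, ht, ht0, sub_zero]

private lemma tor_ne {G : Type*} [AddCommGroup G] {a b : G} {n m : ℕ}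
    (h : (fun x => a + x) '' {x : G | n • x = 0} ⊂ (fun x => b + x) '' {x : G | m • x = 0}) :
    {x : G | n • x = 0} ≠ {x : G | m • x = 0} := by
  intro he
  obtain ⟨t0, ht0, ha⟩ := h.1 ⟨0, by simp, rfl⟩
  have ha' : b + t0 = a := by simpa using ha
  apply h.2
  rintro _ ⟨y, hy, rfl⟩
  refine ⟨y - t0, ?_, ?_⟩
  · rw [he]
    simp only [Set.mem_setOf_eq] at *
    rw [smul_sub, hy, ht0, sub_zero]
  · show a + (y - t0) = b + y
    rw [← ha']; abel

private lemma tor_gcd {G : Type*} [AddCommGroup G] {n m : ℕ}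
    (h : {x : G | n • x = 0} ⊆ {x : G | m • x = 0}) :
    {x : G | n • x = 0} = {x : G | Nat.gcd n m • x = 0} := by
  ext x
  simp only [Set.mem_setOf_eq]
  constructor
  · intro hx
    have hmx : m • x = 0 := h hx
    have hz : (Nat.gcd n m : ℤ) • x = 0 := by
      rw [Nat.gcd_eq_gcd_ab, add_smul, mul_comm (n : ℤ), mul_comm (m : ℤ),
        mul_smul, mul_smul, natCast_zsmul, natCast_zsmul, hx, hmx, smul_zero, smul_zero,
        add_zero]
    rw [← natCast_zsmul, hz]
  · intro hx
    obtain ⟨k, hk⟩ := Nat.gcd_dvd_left n m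
    rw [hk, mul_comm, mul_smul, hx, smul_zero]

/-- Every strictly descending chain of nonempty elementary algebraic subsets of an
abelian group `G` (i.e. cosets `a + G[n]`) is finite; more precisely, if
`a + G[n] ⊊ b + G[m]` with `m ≥ 1`, then `G[n] = G[d]` for some positive divisor `d` of `m`. -/
theorem descending_chain_coset_torsion {G : Type*} [AddCommGroup G] :
    (∀ (a b : G) (n m : ℕ), 1 ≤ m →
      (fun x => a + x) '' {x : G | n • x = 0} ⊂ (fun x => b + x) '' {x : G | m • x = 0} →
      ∃ d : ℕ, d ∣ m ∧ 0 < d ∧ {x : G | n • x = 0} = {x : G | d • x = 0}) ∧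
    ¬ ∃ f : ℕ → Set G,
      (∀ i : ℕ, ∃ (a : G) (n : ℕ), f i = (fun x => a + x) '' {x : G | n • x = 0}) ∧
      (∀ i : ℕ, f (i + 1) ⊂ f i) := by
  constructor
  · intro a b n m hm hsub
    exact ⟨Nat.gcd n m, Nat.gcd_dvd_right _ _, Nat.gcd_pos_of_pos_right _ hm,
      tor_gcd (tor_sub hsub.1)⟩
  · rintro ⟨f, h1, h2⟩
    choose a n hf using h1
    have hn1 : ∀ i, 1 ≤ n (i + 1) := by
      intro i
      by_contra hcon
      have hni : n (i + 1) = 0 := by omega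
      have huniv : f (i + 1) = Set.univ := by
        rw [hf, hni]
        ext x
        constructor
        · intro _; trivial
        · intro _; exact ⟨x - a (i + 1), by simp, by simp⟩
      have hss := h2 i
      rw [huniv] at hss
      exact hss.2 (Set.subset_univ _)
    have hchain : ∀ i, {x : G | n (i + 2) • x = 0} ⊆ {x : G | n (i + 1) • x = 0} ∧
        {x : G | n (i + 2) • x = 0} ≠ {x : G | n (i + 1) • x = 0} := by
      intro i
      have h := h2 (i + 1)
      rw [hf (i + 2), hf (i + 1)] at h
      exact ⟨tor_sub h.1, tor_ne h⟩
    let g : ℕ → ℕ := fun k => Nat.rec (n 1) (fun k gk => Nat.gcd (n (k + 2)) gk) k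
    have hgs : ∀ k, g (k + 1) = Nat.gcd (n (k + 2)) (g k) := fun k => rfl
    have hinv : ∀ k, 0 < g k ∧ {x : G | g k • x = 0} = {x : G | n (k + 1) • x = 0} := by
      intro k
      induction k with
      | zero => exact ⟨hn1 0, rfl⟩
      | succ k ih =>
        have hsub : {x : G | n (k + 2) • x = 0} ⊆ {x : G | g k • x = 0} := by
          rw [ih.2]; exact (hchain k).1
        constructor
        · rw [hgs]; exact Nat.gcd_pos_of_pos_right _ ih.1
        · rw [hgs]; exact (tor_gcd hsub).symm
    have hdec : ∀ k, g (k + 1) < g k := by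
      intro k
      have hdvd : g (k + 1) ∣ g k := by rw [hgs]; exact Nat.gcd_dvd_right _ _
      have hne : g (k + 1) ≠ g k := by
        intro he
        apply (hchain k).2
        rw [← (hinv (k + 1)).2, he, (hinv k).2]
      exact lt_of_le_of_ne (Nat.le_of_dvd (hinv k).1 hdvd) hne
    have hle : ∀ k, g k + k ≤ g 0 := by
      intro k
      induction k with
      | zero => omega
      | succ k ih => have := hdec k; omega
    have := hle (g 0 + 1)
    omega
end

section
/- Every infinite subspace $Y$ of a Noetherian topological space $X$ contains an infinite subspace $Z$ such that every proper closed subset of $Z$ (in the subspace topology of $Z$) is finite. -/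
/-- Every infinite subspace `Y` of a Noetherian space contains an infinite subspace `Z`
such that every proper relatively closed subset of `Z` is finite. -/
theorem noetherian_infinite_subspace {X : Type*} [TopologicalSpace X]
    (hNoeth : ∀ f : ℕ → Set X, (∀ i, IsClosed (f i)) → (∀ i, f (i + 1) ⊆ f i) →
      ∃ N, ∀ i ≥ N, f i = f N)
    (Y : Set X) (hY : Y.Infinite) :
    ∃ Z ⊆ Y, Z.Infinite ∧ ∀ C : Set X, IsClosed C → (Z \ C).Nonempty → (Z ∩ C).Finite := by
  classical
  set S : Set (Set X) := {F | IsClosed F ∧ (Y ∩ F).Infinite} with hS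
  have hunivS : (Set.univ : Set X) ∈ S := ⟨isClosed_univ, by simpa using hY⟩
  -- find a minimal element of S
  have hmin : ∃ F ∈ S, ∀ F' ∈ S, F' ⊆ F → F' = F := by
    by_contra hno
    push_neg at hno
    have step : ∀ F ∈ S, ∃ F', F' ∈ S ∧ F' ⊂ F := by
      intro F hF
      obtain ⟨F', hF', hsub, hne⟩ := hno F hF
      exact ⟨F', hF', ⟨hsub, fun h => hne (le_antisymm hsub h)⟩⟩
    have g : ∀ F : Set X, ∃ F', F ∈ S → F' ∈ S ∧ F' ⊂ F := by
      intro F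
      by_cases hF : F ∈ S
      · obtain ⟨F', h⟩ := step F hF
        exact ⟨F', fun _ => h⟩
      · exact ⟨∅, fun h => absurd h hF⟩
    choose g' hg' using g
    set f : ℕ → Set X := fun n => g'^[n] Set.univ with hf
    have hmem : ∀ n, f n ∈ S := by
      intro n
      induction n with
      | zero => simpa [hf] using hunivS
      | succ n ih =>
        have : f (n + 1) = g' (f n) := by
          simp [hf, Function.iterate_succ_apply']
        rw [this]
        exact (hg' (f n) ih).1
    have hlt : ∀ n, f (n + 1) ⊂ f n := by
      intro n
      have : f (n + 1) = g' (f n) := by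
        simp [hf, Function.iterate_succ_apply']
      rw [this]
      exact (hg' (f n) (hmem n)).2
    obtain ⟨N, hN⟩ := hNoeth f (fun i => (hmem i).1) (fun i => (hlt i).1)
    exact (hlt N).2 ((hN (N + 1) (by omega)) ▸ le_refl _)
  obtain ⟨F, ⟨hFc, hFinf⟩, hFmin⟩ := hmin
  refine ⟨Y ∩ F, Set.inter_subset_left, hFinf, ?_⟩
  intro C hC hne
  obtain ⟨x, hxYF, hxC⟩ := hne
  have hssub : F ∩ C ⊂ F := ⟨Set.inter_subset_left,
    fun h => hxC (h hxYF.2).2⟩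
  have : F ∩ C ∉ S := fun hmem =>
    hssub.2 (hFmin _ hmem hssub.1).ge
  have hfin : (Y ∩ (F ∩ C)).Finite := by
    by_contra hinf
    exact this ⟨hFc.inter hC, hinf⟩
  have : Y ∩ F ∩ C = Y ∩ (F ∩ C) := by rw [Set.inter_assoc]
  rw [this]
  exact hfin
end

section
/- Let $X$ be a set and let $\mathscr{E}$ be a family of subsets of $X$ closed under finite intersections, satisfying the descending chain condition, and with $X\in\mathscr{E}$. Then the family of all finite unions of members of $\mathscr{E}$ is the family of closed sets of a unique topology on $X$, and this topology is Noetherian. -/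
/-- Bryant's construction: if `E` is a family of subsets of `X` closed under finite
intersections, satisfying the descending chain condition, and containing `X`, then the
finite unions of members of `E` form the closed sets of a unique topology on `X`,
and this topology is Noetherian. -/
theorem finite_unions_noetherian_topology {X : Type*} (E : Set (Set X))
    (hX : Set.univ ∈ E)
    (hinter : ∀ A ∈ E, ∀ B ∈ E, A ∩ B ∈ E)
    (hdcc : ∀ f : ℕ → Set X, (∀ n, f n ∈ E) → (∀ n, f (n + 1) ⊆ f n) →
      ∃ N, ∀ n ≥ N, f n = f N) :
    ∃ t : TopologicalSpace X,
      (∀ s : Set X, @IsClosed X t s ↔ ∃ S : Finset (Set X), ↑S ⊆ E ∧ s = ⋃₀ ↑S) ∧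
      (∀ f : ℕ → Set X, (∀ n, @IsClosed X t (f n)) → (∀ n, f (n + 1) ⊆ f n) →
        ∃ N, ∀ n ≥ N, f n = f N) ∧
      (∀ t' : TopologicalSpace X,
        (∀ s : Set X, @IsClosed X t' s ↔ ∃ S : Finset (Set X), ↑S ⊆ E ∧ s = ⋃₀ ↑S) → t' = t) := by
  classical
  set C : Set (Set X) := {s | ∃ S : Finset (Set X), ↑S ⊆ E ∧ s = ⋃₀ ↑S} with hCdef
  -- basic closure properties of C
  have hCE : ∀ A, A ∈ E → A ∈ C := fun A hA =>
    ⟨{A}, by simp [hA], by simp⟩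
  have hCempty : (∅ : Set X) ∈ C := ⟨∅, by simp, by simp⟩
  have hCunion : ∀ a, a ∈ C → ∀ b, b ∈ C → a ∪ b ∈ C := by
    rintro a ⟨S, hS, rfl⟩ b ⟨T, hT, rfl⟩
    refine ⟨S ∪ T, ?_, ?_⟩
    · rw [Finset.coe_union]; exact Set.union_subset hS hT
    · rw [Finset.coe_union, Set.sUnion_union]
  have hCinterE : ∀ c, c ∈ C → ∀ e, e ∈ E → c ∩ e ∈ C := by
    rintro c ⟨S, hS, rfl⟩ e he
    refine ⟨S.image (· ∩ e), ?_, ?_⟩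
    · intro x hx
      rw [Finset.coe_image] at hx
      obtain ⟨s, hs, rfl⟩ := hx
      exact hinter s (hS hs) e he
    · ext x
      simp only [Set.mem_inter_iff, Set.mem_sUnion, Finset.coe_image, Set.mem_image,
        Finset.mem_coe]
      constructor
      · rintro ⟨⟨s, hs, hxs⟩, hxe⟩
        exact ⟨s ∩ e, ⟨s, hs, rfl⟩, hxs, hxe⟩
      · rintro ⟨_, ⟨s, hs, rfl⟩, hxs, hxe⟩
        exact ⟨⟨s, hs, hxs⟩, hxe⟩
  have hCinter : ∀ a, a ∈ C → ∀ b, b ∈ C → a ∩ b ∈ C := by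
    have : ∀ (T : Finset (Set X)), ↑T ⊆ E → ∀ a, a ∈ C → a ∩ ⋃₀ ↑T ∈ C := by
      intro T
      induction T using Finset.induction_on with
      | empty => intro _ a _; simpa using hCempty
      | @insert t T ht ih =>
        intro hTE a ha
        rw [Finset.coe_insert] at hTE ⊢
        rw [Set.sUnion_insert, Set.inter_union_distrib_left]
        exact hCunion _ (hCinterE a ha t (hTE (Set.mem_insert t _)))
          _ (ih (fun x hx => hTE (Set.mem_insert_of_mem _ hx)) a ha)
    rintro a ha b ⟨T, hT, rfl⟩
    exact this T hT a ha
  -- monotonicity of descending sequences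
  have hmono : ∀ (f : ℕ → Set X), (∀ n, f (n + 1) ⊆ f n) → ∀ m n, m ≤ n → f n ⊆ f m := by
    intro f hf m n h
    induction h with
    | refl => exact subset_rfl
    | step h ih => exact Set.Subset.trans (hf _) ih
  -- E is well-founded under strict inclusion
  have hwfE : WellFounded (fun a b : {s // s ∈ E} => a.1 ⊂ b.1) := by
    letI : IsTrans {s // s ∈ E} (fun a b => a.1 ⊂ b.1) :=
      ⟨fun _ _ _ h1 h2 => h1.trans h2⟩
    letI : IsIrrefl {s // s ∈ E} (fun a b => a.1 ⊂ b.1) := ⟨fun _ h => h.ne rfl⟩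
    letI : IsStrictOrder {s // s ∈ E} (fun a b => a.1 ⊂ b.1) := ⟨⟩
    refine RelEmbedding.wellFounded_iff_isEmpty.2 ⟨fun g => ?_⟩
    obtain ⟨N, hN⟩ := hdcc (fun n => (g n).1) (fun n => (g n).2)
      (fun n => (g.map_rel_iff.2 (Nat.lt_succ_self n)).subset)
    exact (g.map_rel_iff.2 (Nat.lt_succ_self N)).ne (hN (N + 1) (Nat.le_succ N))
  -- key lemma: descending chains in C below an element of E stabilize
  have keyAux : ∀ a : {s // s ∈ E}, ∀ f : ℕ → Set X, (∀ n, f n ∈ C) →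
      (∀ n, f (n + 1) ⊆ f n) → f 0 ⊆ a.1 → ∃ N, ∀ n ≥ N, f n = f N := by
    intro a
    refine hwfE.induction (C := fun a => ∀ f : ℕ → Set X, (∀ n, f n ∈ C) →
      (∀ n, f (n + 1) ⊆ f n) → f 0 ⊆ a.1 → ∃ N, ∀ n ≥ N, f n = f N) a ?_
    clear a
    intro a IH f hfC hdesc hsub
    by_cases hA : ∃ k, f k ≠ a.1
    · obtain ⟨k, hk⟩ := hA
      have hsubk : f k ⊆ a.1 := (hmono f hdesc 0 k (Nat.zero_le k)).trans hsub
      have hss : f k ⊂ a.1 := hsubk.ssubset_of_ne hk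
      obtain ⟨S, hSE, hfkS⟩ := hfC k
      have hsA : ∀ s ∈ S, s ⊂ a.1 := by
        intro s hs
        have h1 : s ⊆ f k := by
          rw [hfkS]; exact Set.subset_sUnion_of_mem (Finset.mem_coe.2 hs)
        exact h1.trans_ssubset hss
      have hNs : ∀ s ∈ S, ∃ N, ∀ n ≥ N, f (k + n) ∩ s = f (k + N) ∩ s := by
        intro s hs
        exact IH ⟨s, hSE (Finset.mem_coe.2 hs)⟩ (hsA s hs) (fun n => f (k + n) ∩ s)
          (fun n => hCinterE _ (hfC _) s (hSE (Finset.mem_coe.2 hs)))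
          (fun n => Set.inter_subset_inter_left s (hdesc (k + n)))
          Set.inter_subset_right
      choose! N hN using hNs
      set M := S.sup N with hM
      have hstab : ∀ n ≥ M, f (k + n) = f (k + M) := by
        intro n hn
        refine Set.Subset.antisymm (hmono f hdesc (k + M) (k + n) (by omega)) ?_
        intro x hx
        have hxk : x ∈ f k := hmono f hdesc k (k + M) (by omega) hx
        rw [hfkS] at hxk
        obtain ⟨s, hs, hxs⟩ := hxk
        have hs' : s ∈ S := Finset.mem_coe.1 hs
        have hmem : x ∈ f (k + n) ∩ s := by
          rw [hN s hs' n (le_trans (Finset.le_sup hs') hn),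
            ← hN s hs' M (Finset.le_sup hs')]
          exact ⟨hx, hxs⟩
        exact hmem.1
      refine ⟨k + M, fun n hn => ?_⟩
      have h2 : n = k + (n - k) := by omega
      rw [h2, hstab (n - k) (by omega)]
    · push_neg at hA
      exact ⟨0, fun n _ => (hA n).trans (hA 0).symm⟩
  -- DCC for C
  have hCdcc : ∀ f : ℕ → Set X, (∀ n, f n ∈ C) → (∀ n, f (n + 1) ⊆ f n) →
      ∃ N, ∀ n ≥ N, f n = f N :=
    fun f hfC hd => keyAux ⟨Set.univ, hX⟩ f hfC hd (Set.subset_univ _)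
  -- C is well-founded under strict inclusion
  have hwfC : WellFounded (fun a b : {s // s ∈ C} => a.1 ⊂ b.1) := by
    letI : IsTrans {s // s ∈ C} (fun a b => a.1 ⊂ b.1) :=
      ⟨fun _ _ _ h1 h2 => h1.trans h2⟩
    letI : IsIrrefl {s // s ∈ C} (fun a b => a.1 ⊂ b.1) := ⟨fun _ h => h.ne rfl⟩
    letI : IsStrictOrder {s // s ∈ C} (fun a b => a.1 ⊂ b.1) := ⟨⟩
    refine RelEmbedding.wellFounded_iff_isEmpty.2 ⟨fun g => ?_⟩
    obtain ⟨N, hN⟩ := hCdcc (fun n => (g n).1) (fun n => (g n).2)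
      (fun n => (g.map_rel_iff.2 (Nat.lt_succ_self n)).subset)
    exact (g.map_rel_iff.2 (Nat.lt_succ_self N)).ne (hN (N + 1) (Nat.le_succ N))
  -- finite intersections of members of C lie in C
  have hCsInterFin : ∀ F : Finset (Set X), ↑F ⊆ C → ⋂₀ ↑F ∈ C := by
    intro F
    induction F using Finset.induction_on with
    | empty => intro _; simpa using hCE _ hX
    | @insert t F ht ih =>
      intro hF
      rw [Finset.coe_insert] at hF ⊢
      rw [Set.sInter_insert]
      exact hCinter t (hF (Set.mem_insert t _)) _
        (ih (fun x hx => hF (Set.mem_insert_of_mem _ hx)))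
  -- C is closed under arbitrary intersections
  have hsInter : ∀ A : Set (Set X), A ⊆ C → ⋂₀ A ∈ C := by
    intro A hA
    set D : Set {s // s ∈ C} := {d | ∃ F : Finset (Set X), ↑F ⊆ A ∧ d.1 = ⋂₀ ↑F} with hD
    have hDne : D.Nonempty := ⟨⟨Set.univ, hCE _ hX⟩, ∅, by simp, by simp⟩
    obtain ⟨m, hmD, hmin⟩ := hwfC.has_min D hDne
    obtain ⟨F0, hF0A, hmF0⟩ := hmD
    have hle : ∀ b ∈ A, m.1 ⊆ b := by
      intro b hb
      have hmbD : (⟨m.1 ∩ b, hCinter _ m.2 b (hA hb)⟩ : {s // s ∈ C}) ∈ D := by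
        refine ⟨insert b F0, ?_, ?_⟩
        · rw [Finset.coe_insert]
          exact Set.insert_subset hb hF0A
        · show m.1 ∩ b = ⋂₀ ↑(insert b F0)
          rw [Finset.coe_insert, Set.sInter_insert, ← hmF0]
          exact Set.inter_comm _ _
      have heq : m.1 ∩ b = m.1 := by
        by_contra hne
        exact hmin _ hmbD (Set.inter_subset_left.ssubset_of_ne hne)
      rw [← heq]
      exact Set.inter_subset_right
    have : ⋂₀ A = m.1 := by
      refine Set.Subset.antisymm ?_ (Set.subset_sInter hle)
      rw [hmF0]
      exact Set.sInter_subset_sInter hF0A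
    rw [this]
    exact m.2
  -- the topology
  set t : TopologicalSpace X := TopologicalSpace.ofClosed C hCempty
    (fun A hA => hsInter A hA) (fun a ha b hb => hCunion a ha b hb) with ht
  have hclosed : ∀ s : Set X, @IsClosed X t s ↔ s ∈ C := by
    intro s
    constructor
    · intro h
      have h2 : sᶜᶜ ∈ C := @IsClosed.isOpen_compl X t s h
      rwa [compl_compl] at h2
    · intro h
      refine @IsClosed.mk X t s ?_
      show sᶜᶜ ∈ C
      rwa [compl_compl]
  refine ⟨t, fun s => hclosed s, ?_, ?_⟩
  · intro f hf hd
    exact hCdcc f (fun n => (hclosed (f n)).1 (hf n)) hd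
  · intro t' ht'
    rw [TopologicalSpace.ext_iff_isClosed]
    intro s
    rw [ht' s, hclosed s]
    exact Iff.rfl
end

section
/- Let $G$ be a bounded abelian group with essential order $n=eo(G)$. Then the subgroup $G[n]=\{x\in G:nx=0\}$ has finite index in $G$, and $eo(G[n])=eo(G)=n$. -/
/-- The subgroup `G[n] = {x | n • x = 0}` of an abelian group `G`. -/
def torsionBelow (G : Type*) [AddCommGroup G] (n : ℕ) : AddSubgroup G where
  carrier := {x : G | n • x = 0}
  add_mem' := by
    intro a b ha hb
    simp only [Set.mem_setOf_eq, smul_add] at *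
    rw [ha, hb, add_zero]
  zero_mem' := smul_zero n
  neg_mem' := by
    intro a ha
    simp only [Set.mem_setOf_eq, smul_neg] at *
    rw [ha, neg_zero]

/-- If `G` is a bounded abelian group with essential order `n`, then `G[n]` has finite
index in `G` and `eo(G[n]) = eo(G) = n`. -/
theorem essential_order_torsion_subgroup {G : Type*} [AddCommGroup G]
    (hbdd : ∃ k : ℕ, 0 < k ∧ ∀ x : G, k • x = 0) (n : ℕ)
    (hn : IsLeast {m : ℕ | 0 < m ∧ (Set.range (fun x : G => m • x)).Finite} n) :
    (torsionBelow G n).FiniteIndex ∧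
    IsLeast {m : ℕ | 0 < m ∧ (Set.range (fun x : torsionBelow G n => m • x)).Finite} n := by
  obtain ⟨⟨hnpos, hfin⟩, hleast⟩ := hn
  set H := torsionBelow G n with hH
  let f : G →+ G :=
    { toFun := fun x => n • x
      map_zero' := smul_zero n
      map_add' := fun a b => smul_add n a b }
  have hker : f.ker = H := by
    ext x
    simp only [AddMonoidHom.mem_ker]
    rfl
  have hrangefin : Finite f.range := by
    have hs : (f.range : Set G) = Set.range (fun x : G => n • x) := by
      ext y
      simp [f]
    exact (hs ▸ hfin : (f.range : Set G).Finite).to_subtype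
  have hq : Finite (G ⧸ H) := by
    rw [← hker]
    exact Finite.of_equiv _ (QuotientAddGroup.quotientKerEquivRange f).symm.toEquiv
  have hFI : H.FiniteIndex := H.finiteIndex_of_finite_quotient
  refine ⟨hFI, ⟨⟨hnpos, ?_⟩, ?_⟩⟩
  · refine Set.Finite.subset (Set.finite_singleton 0) ?_
    rintro y ⟨x, rfl⟩
    have hx : n • (x : G) = 0 := x.2
    have : n • x = (0 : H) := Subtype.ext (by simpa using hx)
    simp [this]
  · rintro m ⟨hmpos, hmfin⟩
    refine hleast ⟨hmpos, ?_⟩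
    -- the set of values m • h for h ∈ H, as a set in G
    have hTfin : ((↑) '' (Set.range (fun x : H => m • x)) : Set G).Finite :=
      hmfin.image _
    have hq' : (Set.range (fun q : G ⧸ H => m • q.out)).Finite :=
      Set.finite_range _
    have hsub : Set.range (fun x : G => m • x) ⊆
        Set.image2 (· + ·) (Set.range (fun q : G ⧸ H => m • q.out))
          ((↑) '' (Set.range (fun x : H => m • x))) := by
      rintro y ⟨x, rfl⟩
      set q : G ⧸ H := QuotientAddGroup.mk x with hqdef
      have hmem : x - q.out ∈ H := by
        have : (QuotientAddGroup.mk (x - q.out) : G ⧸ H) = 0 := by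
          simp [QuotientAddGroup.mk_sub, hqdef, QuotientAddGroup.out_eq']
        exact (QuotientAddGroup.eq_zero_iff _).mp this
      refine Set.mem_image2.mpr ⟨m • q.out, ⟨q, rfl⟩,
        ((m • (⟨x - q.out, hmem⟩ : H) : H) : G),
        ⟨m • (⟨x - q.out, hmem⟩ : H), ⟨⟨x - q.out, hmem⟩, rfl⟩, rfl⟩, ?_⟩
      push_cast
      rw [← smul_add]
      congr 1
      abel
    exact Set.Finite.subset (Set.Finite.image2 _ hq' hTfin) hsub
end

section
/- Let $G$ be an abelian group, $Y\subseteq G$ a subset, and $\mathcal{H}=\{H_n:n\in\mathbb{N}\}$ a nonempty countable family of subgroups of $G$ such that for every $k\in\mathbb{N}$, all $a_0,\dots,a_k\in G$ and $H_{i_0},\dots,H_{i_k}\in\mathcal{H}$, the set $Y\setminus\bigcup_{j\le k}(a_j+H_{i_j})$ is nonempty. Then there exists an infinite set $S\subseteq Y$ such that $S\cap(a+H)$ is finite for every $a\in G$ and every $H\in\mathcal{H}$. -/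
/-- If `Y` is not covered by any finite union of cosets of subgroups from a countable
family `H`, then `Y` contains an infinite set `S` meeting every coset of every member
of the family in a finite set. -/
theorem exists_infinite_subset_finite_coset_intersections {G : Type*} [AddCommGroup G]
    (Y : Set G) (H : ℕ → AddSubgroup G)
    (h : ∀ (k : ℕ) (a : Fin (k + 1) → G) (i : Fin (k + 1) → ℕ),
      (Y \ ⋃ j, (fun x => a j + x) '' (H (i j) : Set G)).Nonempty) :
    ∃ S ⊆ Y, S.Infinite ∧
      ∀ (a : G) (n : ℕ), (S ∩ (fun x => a + x) '' (H n : Set G)).Finite := by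
  classical
  -- a choice of a new point avoiding all cosets `f j + H i` for `j, i ≤ k`
  have hnext : ∀ (k : ℕ) (f : Fin (k + 1) → G),
      ∃ y, y ∈ Y ∧ ∀ (j i : ℕ) (hj : j ≤ k), i ≤ k →
        y ∉ (fun x => f ⟨j, by omega⟩ + x) '' (H i : Set G) := by
    intro k f
    obtain ⟨y, hyY, hy⟩ := h (k * (k + 2))
      (fun m => f ⟨m.val / (k + 1), by
        have := m.isLt
        exact Nat.div_lt_of_lt_mul (by nlinarith)⟩)
      (fun m => m.val % (k + 1))
    refine ⟨y, hyY, ?_⟩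
    intro j i hj hi hmem
    apply hy
    refine Set.mem_iUnion.2 ⟨⟨i + j * (k + 1), by nlinarith⟩, ?_⟩
    have h1 : (i + j * (k + 1)) / (k + 1) = j := by
      rw [Nat.add_mul_div_right _ _ (by omega : 0 < k + 1), Nat.div_eq_of_lt (by omega)]
      omega
    have h2 : (i + j * (k + 1)) % (k + 1) = i := by
      rw [Nat.add_mul_mod_self_right, Nat.mod_eq_of_lt (by omega)]
    simp only [h1, h2]
    exact hmem
  choose next hnextY hnextP using hnext
  -- build the sequence of prefixes
  set g : (n : ℕ) → Fin (n + 1) → G :=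
    fun n => Nat.rec (fun _ => next 0 (fun _ => next 0 (fun _ => next 0 (fun _ => 0))))
      (fun k fk => Fin.snoc fk (next k fk)) n with hg
  set s : ℕ → G := fun n => g n (Fin.last n) with hs
  have hgs : ∀ (n : ℕ) (j : Fin (n + 1)), g n j = s j.val := by
    intro n
    induction n with
    | zero =>
      intro j
      have hj0 : (j : ℕ) = 0 := by omega
      rw [hj0]
      rfl
    | succ n ih =>
      intro j
      refine Fin.lastCases ?_ ?_ j
      · rfl
      · intro j'
        have hsucc : g (n + 1) = Fin.snoc (g n) (next n (g n)) := rfl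
        rw [hsucc, Fin.snoc_castSucc, ih j']
        rfl
  have hslast : ∀ k : ℕ, s (k + 1) = next k (g k) := by
    intro k
    have hsucc : g (k + 1) = Fin.snoc (g k) (next k (g k)) := rfl
    show g (k + 1) (Fin.last (k + 1)) = next k (g k)
    rw [hsucc, Fin.snoc_last]
  have hsY : ∀ n, s n ∈ Y := by
    intro n
    cases n with
    | zero => exact hnextY 0 _
    | succ k => rw [hslast k]; exact hnextY k _
  have hkey : ∀ (k j i : ℕ), j ≤ k → i ≤ k →
      s (k + 1) ∉ (fun x => s j + x) '' (H i : Set G) := by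
    intro k j i hj hi hmem
    have := hnextP k (g k) j i hj hi
    apply this
    rw [hgs k ⟨j, by omega⟩]
    rw [hslast k] at hmem
    exact hmem
  -- injectivity
  have hinj : Function.Injective s := by
    have key : ∀ m m' : ℕ, m < m' → s m ≠ s m' := by
      intro m m' hlt heq
      obtain ⟨k, rfl⟩ : ∃ k, m' = k + 1 := ⟨m' - 1, by omega⟩
      apply hkey k m 0 (by omega) (by omega)
      exact ⟨0, (H 0).zero_mem, by simp [heq]⟩
    intro m m' heq
    by_contra hne
    rcases Nat.lt_or_ge m m' with hlt | hge
    · exact key m m' hlt heq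
    · exact key m' m (by omega) heq.symm
  refine ⟨Set.range s, ?_, Set.infinite_range_of_injective hinj, ?_⟩
  · rintro _ ⟨n, rfl⟩; exact hsY n
  intro a n
  -- at most one index > n maps into the coset
  have hpair : ∀ m m' : ℕ, n < m → m < m' →
      s m ∈ (fun x => a + x) '' (H n : Set G) →
      s m' ∈ (fun x => a + x) '' (H n : Set G) → False := by
    rintro m m' hnm hmm' ⟨x, hx, hxe⟩ ⟨x', hx', hxe'⟩
    obtain ⟨k, rfl⟩ : ∃ k, m' = k + 1 := ⟨m' - 1, by omega⟩
    apply hkey k m n (by omega) (by omega)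
    refine ⟨x' - x, sub_mem hx' hx, ?_⟩
    simp only [← hxe, ← hxe']
    abel
  have hI : {m : ℕ | s m ∈ (fun x => a + x) '' (H n : Set G)}.Finite := by
    by_contra hinf
    have hinf' : {m : ℕ | s m ∈ (fun x => a + x) '' (H n : Set G)}.Infinite := hinf
    obtain ⟨m, hm, hnm⟩ := hinf'.exists_gt n
    obtain ⟨m', hm', hmm'⟩ := hinf'.exists_gt m
    exact hpair m m' hnm hmm' hm hm'
  have : Set.range s ∩ (fun x => a + x) '' (H n : Set G) ⊆
      s '' {m : ℕ | s m ∈ (fun x => a + x) '' (H n : Set G)} := by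
    rintro y ⟨⟨m, rfl⟩, hy⟩
    exact ⟨m, hy, rfl⟩
  exact (hI.image s).subset this
end

section
/- Let $X$ be a countably infinite subset of an abelian group $G$. Then there exist infinite disjoint subsets $Y_0,Y_1\subseteq X$ such that $(a_0+Y_0)\cap(a_1+Y_1)$ is finite for all $a_0,a_1\in G$. -/
/-- Greedy sequence in an infinite set `X` avoiding all values `f i - f j + f k`
for previously chosen indices. -/
noncomputable def tsAux {G : Type*} [AddCommGroup G] (X : Set G) (hXi : X.Infinite) : ℕ → G :=
  WellFounded.fix Nat.lt_wfRel.wf (fun n ih =>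
    ((hXi.diff (Set.finite_range (fun p : Fin n × Fin n × Fin n =>
      ih p.1 p.1.isLt - ih p.2.1 p.2.1.isLt + ih p.2.2 p.2.2.isLt))).nonempty).some)

theorem tsAux_spec {G : Type*} [AddCommGroup G] (X : Set G) (hXi : X.Infinite) (n : ℕ) :
    tsAux X hXi n ∈ X \ Set.range (fun p : Fin n × Fin n × Fin n =>
      tsAux X hXi p.1 - tsAux X hXi p.2.1 + tsAux X hXi p.2.2) := by
  have h : tsAux X hXi n = ((hXi.diff (Set.finite_range (fun p : Fin n × Fin n × Fin n =>
      tsAux X hXi p.1 - tsAux X hXi p.2.1 + tsAux X hXi p.2.2))).nonempty).some := by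
    conv_lhs => rw [tsAux]
    rw [WellFounded.fix_eq]
    rfl
  rw [h]
  exact Set.Nonempty.some_mem _

theorem tsAux_mem {G : Type*} [AddCommGroup G] (X : Set G) (hXi : X.Infinite) (n : ℕ) :
    tsAux X hXi n ∈ X := (tsAux_spec X hXi n).1

theorem tsAux_key {G : Type*} [AddCommGroup G] (X : Set G) (hXi : X.Infinite)
    {i j k n : ℕ} (hi : i < n) (hj : j < n) (hk : k < n) :
    tsAux X hXi n ≠ tsAux X hXi i - tsAux X hXi j + tsAux X hXi k := by
  intro h
  exact (tsAux_spec X hXi n).2 ⟨(⟨i, hi⟩, ⟨j, hj⟩, ⟨k, hk⟩), h.symm⟩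

theorem tsAux_inj {G : Type*} [AddCommGroup G] (X : Set G) (hXi : X.Infinite) :
    Function.Injective (tsAux X hXi) := by
  intro m n h
  by_contra hne
  rcases Nat.lt_or_ge m n with h1 | h1
  · exact tsAux_key X hXi h1 h1 h1 (by rw [← h]; abel)
  · have h1' : n < m := lt_of_le_of_ne h1 (Ne.symm hne)
    exact tsAux_key X hXi h1' h1' h1' (by rw [h]; abel)

theorem tsAux_diff_inj {G : Type*} [AddCommGroup G] (X : Set G) (hXi : X.Infinite)
    {a b c d : ℕ} (hab : a ≠ b) (had : a ≠ d) (hcb : c ≠ b) (hcd : c ≠ d)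
    (h : tsAux X hXi a - tsAux X hXi b = tsAux X hXi c - tsAux X hXi d) :
    a = c ∧ b = d := by
  set f := tsAux X hXi with hf
  by_cases hac : a = c
  · subst hac
    refine ⟨rfl, tsAux_inj X hXi ?_⟩
    have := sub_right_injective h
    exact this
  · have hbd : b ≠ d := by
      intro hbd; subst hbd
      exact hac (tsAux_inj X hXi (sub_left_injective h))
    have h' : f a + f d = f c + f b := sub_eq_sub_iff_add_eq_add.mp h
    rcases (show (b < a ∧ c < a ∧ d < a) ∨ (a < b ∧ c < b ∧ d < b) ∨
        (a < c ∧ b < c ∧ d < c) ∨ (a < d ∧ b < d ∧ c < d) by omega) with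
      ⟨h1, h2, h3⟩ | ⟨h1, h2, h3⟩ | ⟨h1, h2, h3⟩ | ⟨h1, h2, h3⟩
    · exact absurd (sub_eq_iff_eq_add.mp h) (tsAux_key X hXi h2 h3 h1)
    · refine absurd ?_ (tsAux_key X hXi h1 h2 h3)
      rw [sub_add_eq_add_sub]
      exact eq_sub_of_add_eq' h'.symm
    · exact absurd (sub_eq_iff_eq_add.mp h.symm) (tsAux_key X hXi h1 h2 h3)
    · refine absurd ?_ (tsAux_key X hXi h3 h1 h2)
      rw [sub_add_eq_add_sub]
      exact eq_sub_of_add_eq' h'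

/-- Every countably infinite subset `X` of an abelian group contains two infinite
disjoint subsets `Y₀, Y₁` such that `(a₀ + Y₀) ∩ (a₁ + Y₁)` is finite for all `a₀, a₁`. -/
theorem exists_disjoint_translation_finite_subsets {G : Type*} [AddCommGroup G]
    (X : Set G) (hXc : X.Countable) (hXi : X.Infinite) :
    ∃ Y₀ Y₁ : Set G, Y₀ ⊆ X ∧ Y₁ ⊆ X ∧ Y₀.Infinite ∧ Y₁.Infinite ∧ Disjoint Y₀ Y₁ ∧
      ∀ a₀ a₁ : G, (((fun x => a₀ + x) '' Y₀) ∩ ((fun x => a₁ + x) '' Y₁)).Finite := by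
  classical
  set f := tsAux X hXi with hf
  have finj : Function.Injective f := tsAux_inj X hXi
  refine ⟨Set.range (fun i => f (2 * i)), Set.range (fun i => f (2 * i + 1)), ?_, ?_, ?_, ?_, ?_, ?_⟩
  · rintro x ⟨i, rfl⟩; exact tsAux_mem X hXi _
  · rintro x ⟨i, rfl⟩; exact tsAux_mem X hXi _
  · exact Set.infinite_range_of_injective (fun i j hij => by
      have := finj hij; omega)
  · exact Set.infinite_range_of_injective (fun i j hij => by
      have := finj hij; omega)
  · rw [Set.disjoint_left]
    rintro x ⟨i, rfl⟩ ⟨j, hj⟩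
    have := finj hj
    omega
  · intro a₀ a₁
    apply Set.Subsingleton.finite
    rintro x ⟨⟨u, ⟨i, rfl⟩, rfl⟩, ⟨v, ⟨j, rfl⟩, hv⟩⟩ y ⟨⟨u', ⟨i', rfl⟩, rfl⟩, ⟨v', ⟨j', rfl⟩, hv'⟩⟩
    have e1 : f (2 * i) - f (2 * j + 1) = a₁ - a₀ := by
      rw [sub_eq_sub_iff_add_eq_add, add_comm]
      exact hv.symm
    have e2 : f (2 * i') - f (2 * j' + 1) = a₁ - a₀ := by
      rw [sub_eq_sub_iff_add_eq_add, add_comm]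
      exact hv'.symm
    have := tsAux_diff_inj X hXi (a := 2 * i) (b := 2 * j + 1) (c := 2 * i') (d := 2 * j' + 1)
      (by omega) (by omega) (by omega) (by omega) (e1.trans e2.symm)
    have hii : (2 * i : ℕ) = 2 * i' := this.1
    show a₀ + f (2 * i) = a₀ + f (2 * i')
    rw [hii]
end
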